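/- Let k be a field of characteristic 0, V a finite-dimensional k-vector space, E = Λ(V) the exterior algebra, and F : E → k a nonzero linear functional vanishing on every graded component of degree ≠ 3, with annihilator ideal I_F = {h ∈ E : F(g·h) = 0 for all g ∈ E}. Then the space of linear functionals K on Λ³V that vanish on the degree-3 component I_F ∩ Λ³V is exactly the one-dimensional span of the restriction of F to Λ³V. In particular, F can be recovered from the ideal I_F up to a nonzero scalar. -/

import Mathlib

/-! Since `F` is concentrated in degree 3, `F (g * x)` for `x ∈ Λ³V` only sees the degree-0
component of `g`, a scalar; so `I_F ∩ Λ³V` is the kernel of `F` on `Λ³V`, and a functional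
vanishing on the kernel of the nonzero functional `F|Λ³V` is a multiple of it. -/

noncomputable section

open ExteriorAlgebra

variable {k : Type} [Field k] [CharZero k]
variable {V : Type} [AddCommGroup V] [Module k V] [FiniteDimensional k V]

/-- The annihilator ideal `I_F = {h ∈ E : F(g·h) = 0 for all g ∈ E}` of a linear
functional `F` on the exterior algebra `E = Λ(V)`, as a set. -/
def annSet (F : ExteriorAlgebra k V →ₗ[k] k) : Set (ExteriorAlgebra k V) :=
  {h : ExteriorAlgebra k V | ∀ g : ExteriorAlgebra k V, F (g * h) = 0}

namespace ExteriorAlgebra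

variable {R M N : Type*} [CommRing R] [AddCommGroup M] [Module R M] [AddCommGroup N] [Module R N]

theorem comp_exteriorPower_subtype_ne_zero {F : ExteriorAlgebra R M →ₗ[R] N} (hF : F ≠ 0)
    {d : ℕ} (hdeg : ∀ n : ℕ, n ≠ d → ∀ x ∈ ⋀[R]^n M, F x = 0) :
    F ∘ₗ (⋀[R]^d M).subtype ≠ 0 := by
  intro hd
  refine hF (DirectSum.decompose_lhom_ext (fun n : ℕ => ⋀[R]^n M) fun n => ?_)
  obtain rfl | hn := eq_or_ne n d
  · simpa using hd
  · exact LinearMap.ext fun x => by simp [hdeg n hn x x.2]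

theorem mem_exteriorPower_zero_iff {x : ExteriorAlgebra R M} :
    x ∈ ⋀[R]^0 M ↔ ∃ c : R, algebraMap R _ c = x := by
  rw [exteriorPower, Submodule.pow_zero, Submodule.mem_one]

theorem forall_map_mul_eq_zero_iff {F : ExteriorAlgebra R M →ₗ[R] N} {d : ℕ}
    (hdeg : ∀ n : ℕ, n ≠ d → ∀ x ∈ ⋀[R]^n M, F x = 0) {x : ExteriorAlgebra R M}
    (hx : x ∈ ⋀[R]^d M) :
    (∀ g, F (g * x) = 0) ↔ F x = 0 := by
  refine ⟨fun h => by simpa using h 1, fun hFx g => ?_⟩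
  induction g using DirectSum.Decomposition.inductionOn (fun n : ℕ => ⋀[R]^n M) with
  | zero => simp
  | add a b ha hb => rw [add_mul, map_add, ha, hb, add_zero]
  | @homogeneous i m =>
    obtain rfl | hi := eq_or_ne i 0
    · obtain ⟨c, hc⟩ := mem_exteriorPower_zero_iff.mp m.2
      rw [← hc, ← Algebra.smul_def, map_smul, hFx, smul_zero]
    · exact hdeg (i + d) (by omega) _ (SetLike.mul_mem_graded m.2 hx)

end ExteriorAlgebra

theorem LinearMap.setOf_ker_le_ker_eq_range_smul {K E : Type*} [Field K] [AddCommGroup E]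
    [Module K E] (f : E →ₗ[K] K) :
    {g : E →ₗ[K] K | ∀ x, f x = 0 → g x = 0} = Set.range (fun c : K => c • f) := by
  ext g
  refine ⟨fun hg => ?_, ?_⟩
  · have hspan : g ∈ Submodule.span K (Set.range fun _ : Unit => f) :=
      mem_span_of_iInf_ker_le_ker (by simpa [SetLike.le_def] using hg)
    rwa [Set.range_const, Submodule.mem_span_singleton] at hspan
  · rintro ⟨c, rfl⟩ x hx
    simp [hx]

/-- Skew-commutative Macaulay correspondence (converse direction): for a nonzero linear
functional `F` on `E = Λ(V)` vanishing in all degrees `≠ 3`, the space of linear functionals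
on `Λ³V` vanishing on `I_F ∩ Λ³V` is exactly the one-dimensional span of the restriction of
`F` to `Λ³V`; in particular `F` is recovered from `I_F` up to a nonzero scalar. -/
theorem skew_macaulay_converse
    (F : ExteriorAlgebra k V →ₗ[k] k) (hF : F ≠ 0)
    (hdeg : ∀ n : ℕ, n ≠ 3 → ∀ x ∈ ⋀[k]^n V, F x = 0) :
    F ∘ₗ (⋀[k]^3 V).subtype ≠ 0 ∧
    {K : (⋀[k]^3 V) →ₗ[k] k | ∀ x : ⋀[k]^3 V, (x : ExteriorAlgebra k V) ∈ annSet F → K x = 0}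
      = Set.range (fun c : k => c • (F ∘ₗ (⋀[k]^3 V).subtype)) := by
  refine ⟨comp_exteriorPower_subtype_ne_zero hF hdeg, ?_⟩
  have hann : ∀ x : ⋀[k]^3 V, (x : ExteriorAlgebra k V) ∈ annSet F ↔ F x = 0 :=
    fun x => forall_map_mul_eq_zero_iff hdeg x.2
  simp only [hann]
  exact LinearMap.setOf_ker_le_ker_eq_range_smul (F ∘ₗ (⋀[k]^3 V).subtype)
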